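/- Let p be a natural number, let F be the free group on generators γ₁, …, γ_p, let ℂ[F] be its group algebra over ℂ, let ε : ℂ[F] → ℂ be the augmentation homomorphism (the ℂ-algebra map sending every group element to 1), and let I = ker ε be the augmentation ideal. Then there is an isomorphism of graded ℂ-algebras from the free associative algebra ℂ⟨x₁, …, x_p⟩ on p generators, graded by word length, onto the associated graded algebra gr ℂ[F] = ⊕_{n≥0} Iⁿ/Iⁿ⁺¹ of ℂ[F] with respect to the I-adic filtration (with multiplication induced by the multiplication of ℂ[F]), which sends the generator xᵢ to the class of γᵢ − 1 in I/I². -/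

import Mathlib

/-- The group algebra of the free group on `p` generators over `ℂ`. -/
abbrev FreeGroupAlgebra (p : ℕ) : Type := MonoidAlgebra ℂ (FreeGroup (Fin p))

/-- The augmentation homomorphism: the `ℂ`-algebra map sending every group element to `1`. -/
noncomputable def augmentation (p : ℕ) : FreeGroupAlgebra p →ₐ[ℂ] ℂ :=
  MonoidAlgebra.lift ℂ ℂ (FreeGroup (Fin p)) 1

/-- The augmentation ideal `I = ker ε`. -/
noncomputable def augIdeal (p : ℕ) : Ideal (FreeGroupAlgebra p) :=
  RingHom.ker (augmentation p)

/-- The generator `γᵢ` of the free group, viewed in the group algebra. -/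
noncomputable def γ (p : ℕ) (i : Fin p) : FreeGroupAlgebra p :=
  MonoidAlgebra.of ℂ (FreeGroup (Fin p)) (FreeGroup.of i)

theorem γ_sub_one_mem (p : ℕ) (i : Fin p) : γ p i - 1 ∈ augIdeal p := by
  simp [augIdeal, RingHom.mem_ker, γ, map_sub, augmentation, MonoidAlgebra.lift_of]

/-- Powers of the augmentation ideal are closed under right multiplication. -/
theorem augIdeal_pow_mul_right (p : ℕ) (m : ℕ) :
    ∀ x ∈ (augIdeal p) ^ m, ∀ r : FreeGroupAlgebra p, x * r ∈ (augIdeal p) ^ m := by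
  induction m with
  | zero =>
    intro x _ r
    rw [Submodule.pow_zero, Submodule.one_eq_span]
    exact Submodule.mem_span_singleton.mpr ⟨x * r, by simp⟩
  | succ m ih =>
    intro x hx r
    refine Submodule.mul_induction_on
      (hx : x ∈ (augIdeal p) ^ m * augIdeal p) ?_ ?_
    · intro a ha b hb
      have hbr : b * r ∈ augIdeal p := by
        rw [augIdeal, RingHom.mem_ker] at hb ⊢
        rw [map_mul, hb, zero_mul]
      show a * b * r ∈ (augIdeal p) ^ m * augIdeal p
      rw [mul_assoc]
      exact Submodule.mul_mem_mul ha hbr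
    · intro s t hs ht
      show (s + t) * r ∈ (augIdeal p) ^ (m + 1)
      rw [add_mul]
      exact add_mem hs ht

/-- `Iᵐ · Iⁿ ⊆ Iᵐ⁺ⁿ` for the augmentation ideal. -/
theorem augIdeal_pow_mul_mem (p : ℕ) (m n : ℕ) (u v : FreeGroupAlgebra p)
    (hu : u ∈ (augIdeal p) ^ m) (hv : v ∈ (augIdeal p) ^ n) :
    u * v ∈ (augIdeal p) ^ (m + n) := by
  induction n generalizing v with
  | zero => exact augIdeal_pow_mul_right p m u hu v
  | succ n ih =>
    refine Submodule.mul_induction_on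
      (hv : v ∈ (augIdeal p) ^ n * augIdeal p) ?_ ?_
    · intro a ha b hb
      show u * (a * b) ∈ (augIdeal p) ^ (m + n) * augIdeal p
      rw [← mul_assoc]
      exact Submodule.mul_mem_mul (ih a ha) hb
    · intro s t hs ht
      show u * (s + t) ∈ (augIdeal p) ^ (m + (n + 1))
      rw [mul_add]
      exact add_mem hs ht

/-- The degree-`n` piece `Iⁿ/Iⁿ⁺¹` of the associated graded algebra of the `I`-adic
filtration, as a `ℂ`-vector space. -/
noncomputable abbrev grPiece (p n : ℕ) :=
  (Submodule.restrictScalars ℂ ((augIdeal p) ^ n)) ⧸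
    ((Submodule.restrictScalars ℂ ((augIdeal p) ^ (n + 1))).comap
      (Submodule.restrictScalars ℂ ((augIdeal p) ^ n)).subtype)

/-- The span of the generators `x₁, …, x_p` of the free associative algebra
`ℂ⟨x₁, …, x_p⟩`; its `n`-th power is the degree-`n` homogeneous component of the
grading by word length. -/
noncomputable def genSpan (p : ℕ) : Submodule ℂ (FreeAlgebra ℂ (Fin p)) :=
  Submodule.span ℂ (Set.range (FreeAlgebra.ι ℂ))

/-!
Let `θ : ℂ⟨x₁, …, x_p⟩ → ℂ[F]` be the algebra map `xᵢ ↦ γᵢ - 1`. It sends the span `ℂ⟨x⟩ₙ` of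
the words of length `n` into `Iⁿ`, hence induces linear maps `ℂ⟨x⟩ₙ → Iⁿ/Iⁿ⁺¹`, which are
unital, multiplicative and send `xᵢ` to `[γᵢ - 1]`; it remains to see that they are bijective.

Surjectivity: `I` is spanned by the elements `g - 1`, and `gh - 1 ≡ (g - 1) + (h - 1)` modulo `I²`,
so `I ⊆ θ(ℂ⟨x⟩₁) + I²`; multiplying out gives `Iⁿ ⊆ θ(ℂ⟨x⟩ₙ) + Iⁿ⁺¹`.

Injectivity is Magnus' argument. Modulo the ideal of words of length `> n` each `xᵢ` is nilpotent,
so `γᵢ ↦ 1 + xᵢ` defines an algebra map `μ` from `ℂ[F]` to this truncation. It sends `I` into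
the words of length `≥ 1`, so it kills `Iⁿ⁺¹`, and `μ ∘ θ` is the quotient map, which is injective
on the homogeneous part of degree `n`.
-/

namespace Magnus

open Submodule
open scoped Pointwise

theorem mem_span_of_sub_one {k G : Type*} [CommRing k] [Monoid G] {x : MonoidAlgebra k G}
    (hx : MonoidAlgebra.lift k k G 1 x = 0) :
    x ∈ span k (Set.range fun g => MonoidAlgebra.of k G g - 1) := by
  suffices h : ∀ y : MonoidAlgebra k G, y - MonoidAlgebra.lift k k G 1 y • 1 ∈
      span k (Set.range fun g => MonoidAlgebra.of k G g - 1) by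
    simpa [hx] using h x
  intro y
  induction y using MonoidAlgebra.induction_linear with
  | zero => simp
  | add y z hy hz =>
    rw [map_add, add_smul, add_sub_add_comm]
    exact add_mem hy hz
  | single g c =>
    have hsingle : MonoidAlgebra.single g c = c • MonoidAlgebra.of k G g := by
      rw [MonoidAlgebra.of_apply, MonoidAlgebra.smul_single', mul_one]
    rw [MonoidAlgebra.lift_single, MonoidHom.one_apply, smul_eq_mul, mul_one, hsingle,
      ← smul_sub]
    exact smul_mem _ c (subset_span ⟨g, rfl⟩)

section WordLength

variable (k : Type*) {α : Type*} [CommRing k]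

noncomputable abbrev lengthSupported (S : Set ℕ) : Submodule k (MonoidAlgebra k (FreeMonoid α)) :=
  MonoidAlgebra.supported k k (FreeMonoid.length ⁻¹' S)

variable {k}

theorem single_mem_lengthSupported {S : Set ℕ} {w : FreeMonoid α} (hw : w.length ∈ S) (c : k) :
    MonoidAlgebra.single w c ∈ lengthSupported k S :=
  MonoidAlgebra.mem_supported.mpr fun _ hv => by
    rwa [Set.mem_preimage, Finset.mem_singleton.mp (Finsupp.support_single_subset hv)]

theorem lengthSupported_mul_le (S T : Set ℕ) :
    lengthSupported k (α := α) S * lengthSupported k T ≤ lengthSupported k (S + T) := by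
  classical
  refine mul_le.mpr fun f hf g hg w hw => ?_
  obtain ⟨u, hu, v, hv, rfl⟩ :=
    Finset.mem_mul.mp (MonoidAlgebra.support_coeff_mul_subset f g hw)
  rw [Set.mem_preimage, FreeMonoid.length_mul]
  exact Set.add_mem_add (MonoidAlgebra.mem_supported.mp hf hu)
    (MonoidAlgebra.mem_supported.mp hg hv)

theorem disjoint_lengthSupported {S T : Set ℕ} (h : Disjoint S T) :
    Disjoint (lengthSupported k (α := α) S) (lengthSupported k T) := by
  refine disjoint_def.mpr fun f hS hT => ?_
  have hsupp : f.coeff.support = ∅ := Finset.coe_eq_empty.mp <| Set.eq_empty_of_subset_empty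
    fun w hw => (h.preimage FreeMonoid.length).le_bot
      ⟨MonoidAlgebra.mem_supported.mp hS hw, MonoidAlgebra.mem_supported.mp hT hw⟩
  exact MonoidAlgebra.coeff_inj.mp (Finsupp.support_eq_empty.mp hsupp)

theorem lengthSupported_Ici_mul_le (a b : ℕ) :
    lengthSupported k (α := α) (Set.Ici a) * lengthSupported k (Set.Ici b) ≤
      lengthSupported k (Set.Ici (a + b)) :=
  (lengthSupported_mul_le _ _).trans <|
    MonoidAlgebra.supported_mono (Set.preimage_mono (Set.Ici_add_Ici_subset a b))

theorem mem_lengthSupported_Ici_zero (f : MonoidAlgebra k (FreeMonoid α)) :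
    f ∈ lengthSupported k (Set.Ici 0) :=
  MonoidAlgebra.mem_supported.mpr fun w _ => Nat.zero_le w.length

theorem pow_mem_lengthSupported_Ici {f : MonoidAlgebra k (FreeMonoid α)}
    (hf : f ∈ lengthSupported k (Set.Ici 1)) (n : ℕ) : f ^ n ∈ lengthSupported k (Set.Ici n) := by
  induction n with
  | zero => exact mem_lengthSupported_Ici_zero _
  | succ n ih => exact lengthSupported_Ici_mul_le n 1 (pow_succ f n ▸ mul_mem_mul ih hf)

theorem equivMonoidAlgebraFreeMonoid_ι (i : α) :
    FreeAlgebra.equivMonoidAlgebraFreeMonoid (FreeAlgebra.ι k i) =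
      MonoidAlgebra.single (FreeMonoid.of i) 1 := by
  simp [FreeAlgebra.equivMonoidAlgebraFreeMonoid, MonoidAlgebra.of_apply]

theorem map_span_range_ι_pow_le (n : ℕ) :
    (span k (Set.range (FreeAlgebra.ι k)) ^ n).map
        FreeAlgebra.equivMonoidAlgebraFreeMonoid.toAlgHom.toLinearMap ≤
      lengthSupported k (α := α) {n} := by
  induction n with
  | zero =>
    rw [pow_zero, Submodule.map_one, Submodule.one_le, MonoidAlgebra.one_def]
    exact single_mem_lengthSupported FreeMonoid.length_one 1
  | succ n ih =>
    have h_one : (span k (Set.range (FreeAlgebra.ι k))).map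
        FreeAlgebra.equivMonoidAlgebraFreeMonoid.toAlgHom.toLinearMap ≤
          lengthSupported k (α := α) {1} := by
      refine (map_span_le _ _ _).mpr ?_
      rintro _ ⟨i, rfl⟩
      rw [AlgHom.toLinearMap_apply, AlgEquiv.coe_toAlgHom, equivMonoidAlgebraFreeMonoid_ι]
      exact single_mem_lengthSupported (FreeMonoid.length_of i) 1
    rw [pow_succ, Submodule.map_mul, ← Set.singleton_add_singleton]
    exact (mul_le_mul' ih h_one).trans (lengthSupported_mul_le _ _)

end WordLength

section Truncation

variable {k α : Type*} [CommRing k]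

variable (k α) in
noncomputable def truncIdeal (N : ℕ) : Ideal (MonoidAlgebra k (FreeMonoid α)) where
  toAddSubmonoid := (lengthSupported k (Set.Ici N)).toAddSubmonoid
  smul_mem' f g hg := by
    show f * g ∈ lengthSupported k (Set.Ici N)
    rw [← zero_add N]
    exact lengthSupported_Ici_mul_le 0 N (mul_mem_mul (mem_lengthSupported_Ici_zero f) hg)

instance (N : ℕ) : (truncIdeal k α N).IsTwoSided where
  mul_mem_of_left g hf :=
    lengthSupported_Ici_mul_le N 0 (mul_mem_mul hf (mem_lengthSupported_Ici_zero g))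

theorem mem_truncIdeal {N : ℕ} {f : MonoidAlgebra k (FreeMonoid α)} :
    f ∈ truncIdeal k α N ↔ f ∈ lengthSupported k (Set.Ici N) :=
  Iff.rfl

variable (k α) in
abbrev Truncation (N : ℕ) := MonoidAlgebra k (FreeMonoid α) ⧸ truncIdeal k α N

variable (k) in
noncomputable abbrev truncMk (N : ℕ) : MonoidAlgebra k (FreeMonoid α) →ₐ[k] Truncation k α N :=
  Ideal.Quotient.mkₐ k (truncIdeal k α N)

variable (k α) in
noncomputable abbrev truncLengthGe (N m : ℕ) : Submodule k (Truncation k α N) :=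
  (lengthSupported k (Set.Ici m)).map (truncMk k N).toLinearMap

theorem truncLengthGe_mul_le (N a b : ℕ) :
    truncLengthGe k α N a * truncLengthGe k α N b ≤ truncLengthGe k α N (a + b) := by
  rw [← Submodule.map_mul]
  exact map_mono (lengthSupported_Ici_mul_le a b)

theorem truncLengthGe_zero (N : ℕ) : truncLengthGe k α N 0 = ⊤ :=
  eq_top_iff.mpr fun x _ => by
    obtain ⟨f, rfl⟩ := Ideal.Quotient.mk_surjective x
    exact mem_map_of_mem (mem_lengthSupported_Ici_zero f)

theorem truncLengthGe_self (N : ℕ) : truncLengthGe k α N N = ⊥ :=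
  eq_bot_iff.mpr <| map_le_iff_le_comap.mpr fun _ hf =>
    Ideal.Quotient.eq_zero_iff_mem.mpr (mem_truncIdeal.mpr hf)

theorem isNilpotent_truncMk_single_of (N : ℕ) (i : α) :
    IsNilpotent (truncMk k N (MonoidAlgebra.single (FreeMonoid.of i) 1)) := by
  refine ⟨N, ?_⟩
  rw [← map_pow, Ideal.Quotient.mkₐ_eq_mk, Ideal.Quotient.eq_zero_iff_mem]
  exact pow_mem_lengthSupported_Ici (single_mem_lengthSupported (FreeMonoid.length_of i).ge _) N

variable (k α) in
noncomputable def magnusTrunc (N : ℕ) : MonoidAlgebra k (FreeGroup α) →ₐ[k] Truncation k α N :=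
  MonoidAlgebra.lift k _ _ <| (Units.coeHom _).comp <|
    FreeGroup.lift fun i => (isNilpotent_truncMk_single_of N i).isUnit_one_add.unit

theorem magnusTrunc_of (N : ℕ) (i : α) :
    magnusTrunc k α N (MonoidAlgebra.of k _ (FreeGroup.of i)) =
      1 + truncMk k N (MonoidAlgebra.single (FreeMonoid.of i) 1) := by
  simp [magnusTrunc]

theorem magnusTrunc_of_sub_one_mem (N : ℕ) (g : FreeGroup α) :
    magnusTrunc k α N (MonoidAlgebra.of k _ g) - 1 ∈ truncLengthGe k α N 1 := by
  have hleft (x : Truncation k α N) {y} (hy : y ∈ truncLengthGe k α N 1) :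
      x * y ∈ truncLengthGe k α N 1 := by
    simpa using truncLengthGe_mul_le N 0 1
      (mul_mem_mul (truncLengthGe_zero (k := k) N ▸ mem_top) hy)
  induction g using FreeGroup.induction_on with
  | C1 =>
    rw [map_one, map_one, sub_self]
    exact zero_mem _
  | of i =>
    rw [magnusTrunc_of, add_sub_cancel_left]
    exact mem_map_of_mem (single_mem_lengthSupported (FreeMonoid.length_of i).ge 1)
  | inv_of i ih =>
    set u := magnusTrunc k α N (MonoidAlgebra.of k _ (FreeGroup.of i))
    set v := magnusTrunc k α N (MonoidAlgebra.of k _ (FreeGroup.of i)⁻¹)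
    have hvu : v * u = 1 := by rw [← map_mul, ← map_mul, inv_mul_cancel, map_one, map_one]
    rw [show v - 1 = -(v * (u - 1)) by rw [mul_sub, hvu, mul_one, neg_sub]]
    exact neg_mem (hleft v ih)
  | mul g h ihg ihh =>
    rw [map_mul, map_mul, show ∀ u v : Truncation k α N, u * v - 1 = u * (v - 1) + (u - 1) by
      intro u v; noncomm_ring]
    exact add_mem (hleft _ ihh) ihg

variable (k α) in
noncomputable def liftSubOne : FreeAlgebra k α →ₐ[k] MonoidAlgebra k (FreeGroup α) :=
  FreeAlgebra.lift k fun i => MonoidAlgebra.of k _ (FreeGroup.of i) - 1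

theorem magnusTrunc_comp_liftSubOne (N : ℕ) :
    (magnusTrunc k α N).comp (liftSubOne k α) =
      (truncMk k N).comp FreeAlgebra.equivMonoidAlgebraFreeMonoid.toAlgHom := by
  refine FreeAlgebra.hom_ext (funext fun i => ?_)
  simp only [Function.comp_apply, AlgHom.comp_apply, liftSubOne, FreeAlgebra.lift_ι_apply,
    map_sub, map_one, magnusTrunc_of, add_sub_cancel_left, AlgEquiv.coe_toAlgHom,
    equivMonoidAlgebraFreeMonoid_ι]

end Truncation

section AssociatedGraded

variable {p : ℕ}

noncomputable abbrev augPow (p n : ℕ) : Submodule ℂ (FreeGroupAlgebra p) :=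
  ((augIdeal p) ^ n).restrictScalars ℂ

theorem augPow_mul_le (m n : ℕ) : augPow p m * augPow p n ≤ augPow p (m + n) :=
  mul_le.mpr fun u hu v hv => augIdeal_pow_mul_mem p m n u v hu hv

theorem augPow_succ (n : ℕ) : augPow p (n + 1) = augPow p n * augPow p 1 := by
  rw [augPow, augPow, augPow, Submodule.pow_succ, Submodule.pow_one]
  rfl

theorem augPow_zero : augPow p 0 = ⊤ := by
  rw [augPow, Submodule.pow_zero, Ideal.one_eq_top, restrictScalars_top]

theorem augPow_succ_le (n : ℕ) : augPow p (n + 1) ≤ augPow p n :=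
  Ideal.pow_le_pow_right n.le_succ

theorem mem_augPow_one {x : FreeGroupAlgebra p} : x ∈ augPow p 1 ↔ x ∈ augIdeal p := by
  rw [restrictScalars_mem, Submodule.pow_one]

theorem of_sub_one_mem_augIdeal (g : FreeGroup (Fin p)) :
    MonoidAlgebra.of ℂ _ g - 1 ∈ augIdeal p := by
  simp [augIdeal, augmentation]

theorem augPow_one_le_span_of_sub_one :
    augPow p 1 ≤ span ℂ (Set.range fun g => MonoidAlgebra.of ℂ (FreeGroup (Fin p)) g - 1) :=
  fun _ hx => mem_span_of_sub_one (RingHom.mem_ker.mp (mem_augPow_one.mp hx))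

theorem grPiece_mk_eq_iff {n : ℕ} (u v : augPow p n) :
    (Submodule.Quotient.mk u : grPiece p n) = Submodule.Quotient.mk v ↔
      (u : FreeGroupAlgebra p) - v ∈ augPow p (n + 1) := by
  rw [Submodule.Quotient.eq, mem_comap]
  rfl

theorem mul_sub_mul_mem_augPow {m n : ℕ} {u u' v v' : FreeGroupAlgebra p}
    (hu' : u' ∈ augPow p m) (hv : v ∈ augPow p n)
    (hu : u - u' ∈ augPow p (m + 1)) (hvv : v - v' ∈ augPow p (n + 1)) :
    u * v - u' * v' ∈ augPow p (m + n + 1) := by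
  rw [show u * v - u' * v' = (u - u') * v + u' * (v - v') by noncomm_ring]
  refine add_mem ?_ (augPow_mul_le m (n + 1) (mul_mem_mul hu' hvv))
  exact (Nat.add_right_comm m 1 n).symm ▸ augPow_mul_le (m + 1) n (mul_mem_mul hu hv)

local notation "θ" => liftSubOne ℂ (Fin p)

theorem liftSubOne_ι (i : Fin p) : θ (FreeAlgebra.ι ℂ i) = γ p i - 1 :=
  FreeAlgebra.lift_ι_apply _ _

theorem map_genSpan_le : (genSpan p).map (AlgHom.toLinearMap θ) ≤ augPow p 1 := by
  refine (map_span_le _ _ _).mpr ?_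
  rintro _ ⟨i, rfl⟩
  rw [AlgHom.toLinearMap_apply, liftSubOne_ι, mem_augPow_one]
  exact γ_sub_one_mem p i

theorem map_genSpan_pow_le (n : ℕ) : (genSpan p ^ n).map (AlgHom.toLinearMap θ) ≤ augPow p n := by
  induction n with
  | zero => exact augPow_zero.symm ▸ le_top
  | succ n ih =>
    rw [pow_succ, Submodule.map_mul]
    exact (mul_le_mul' ih map_genSpan_le).trans (augPow_mul_le n 1)

theorem of_sub_one_mem_map_genSpan_sup (g : FreeGroup (Fin p)) :
    MonoidAlgebra.of ℂ _ g - 1 ∈ (genSpan p).map (AlgHom.toLinearMap θ) ⊔ augPow p 2 := by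
  have hprod (g h : FreeGroup (Fin p)) :
      (MonoidAlgebra.of ℂ _ g - 1) * (MonoidAlgebra.of ℂ _ h - 1) ∈ augPow p 2 :=
    augPow_mul_le 1 1 (mul_mem_mul (mem_augPow_one.mpr (of_sub_one_mem_augIdeal g))
      (mem_augPow_one.mpr (of_sub_one_mem_augIdeal h)))
  induction g using FreeGroup.induction_on with
  | C1 =>
    rw [map_one, sub_self]
    exact zero_mem _
  | of i => exact mem_sup_left ⟨FreeAlgebra.ι ℂ i, subset_span ⟨i, rfl⟩, liftSubOne_ι i⟩
  | inv_of i ih =>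
    set u := MonoidAlgebra.of ℂ (FreeGroup (Fin p)) (FreeGroup.of i)
    set v := MonoidAlgebra.of ℂ (FreeGroup (Fin p)) (FreeGroup.of i)⁻¹
    have hvu : v * u = 1 := by rw [← map_mul, inv_mul_cancel, map_one]
    rw [show v - 1 = -((v - 1) * (u - 1)) - (u - 1) by
      rw [sub_mul, mul_sub, hvu]; noncomm_ring]
    exact sub_mem (neg_mem (mem_sup_right (hprod _ _))) ih
  | mul g h ihg ihh =>
    rw [map_mul, show ∀ u v : FreeGroupAlgebra p, u * v - 1 = (u - 1) * (v - 1) + (u - 1 + (v - 1))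
      by intro u v; noncomm_ring]
    exact add_mem (mem_sup_right (hprod g h)) (add_mem ihg ihh)

theorem augPow_zero_le_map_genSpan_pow_sup :
    augPow p 0 ≤ (genSpan p ^ 0).map (AlgHom.toLinearMap θ) ⊔ augPow p 1 := by
  intro x _
  set c := augmentation p x
  rw [← add_sub_cancel (algebraMap ℂ _ c) x]
  refine add_mem (mem_sup_left ⟨algebraMap ℂ _ c, ?_, AlgHom.commutes _ _⟩) (mem_sup_right ?_)
  · exact pow_zero (genSpan p) ▸ algebraMap_mem _
  · rw [mem_augPow_one, augIdeal, RingHom.mem_ker, map_sub, AlgHom.commutes,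
      Algebra.algebraMap_self_apply, sub_self]

theorem augPow_one_le_map_genSpan_sup :
    augPow p 1 ≤ (genSpan p).map (AlgHom.toLinearMap θ) ⊔ augPow p 2 :=
  augPow_one_le_span_of_sub_one.trans <|
    span_le.mpr <| Set.range_subset_iff.mpr of_sub_one_mem_map_genSpan_sup

theorem augPow_le_map_genSpan_pow_sup (n : ℕ) :
    augPow p n ≤ (genSpan p ^ n).map (AlgHom.toLinearMap θ) ⊔ augPow p (n + 1) := by
  induction n with
  | zero => exact augPow_zero_le_map_genSpan_pow_sup
  | succ n ih =>
    calc augPow p (n + 1) = augPow p n * augPow p 1 := augPow_succ n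
      _ ≤ ((genSpan p ^ n).map (AlgHom.toLinearMap θ) ⊔ augPow p (n + 1)) *
          ((genSpan p).map (AlgHom.toLinearMap θ) ⊔ augPow p 2) :=
        mul_le_mul' ih augPow_one_le_map_genSpan_sup
      _ ≤ (genSpan p ^ (n + 1)).map (AlgHom.toLinearMap θ) ⊔ augPow p (n + 2) := by
        rw [Submodule.mul_sup, Submodule.sup_mul, Submodule.sup_mul, pow_succ, Submodule.map_mul]
        refine sup_le (sup_le le_sup_left ?_) (sup_le ?_ ?_) <;> refine le_sup_of_le_right ?_
        · exact (mul_le_mul' le_rfl map_genSpan_le).trans (augPow_mul_le (n + 1) 1)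
        · exact (mul_le_mul' (map_genSpan_pow_le n) le_rfl).trans (augPow_mul_le n 2)
        · exact (augPow_mul_le (n + 1) 2).trans (augPow_succ_le (n + 2))

theorem map_magnusTrunc_augPow_one_le (N : ℕ) :
    (augPow p 1).map (AlgHom.toLinearMap (magnusTrunc ℂ (Fin p) N)) ≤
      truncLengthGe ℂ (Fin p) N 1 :=
  (map_mono augPow_one_le_span_of_sub_one).trans <| (map_span_le _ _ _).mpr <| by
    rintro _ ⟨g, rfl⟩
    rw [AlgHom.toLinearMap_apply, map_sub, map_one]
    exact magnusTrunc_of_sub_one_mem N g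

theorem map_magnusTrunc_augPow_le (N m : ℕ) :
    (augPow p m).map (AlgHom.toLinearMap (magnusTrunc ℂ (Fin p) N)) ≤
      truncLengthGe ℂ (Fin p) N m := by
  induction m with
  | zero => exact (truncLengthGe_zero (k := ℂ) (α := Fin p) N).symm ▸ le_top
  | succ m ih =>
    rw [augPow_succ, Submodule.map_mul]
    exact (mul_le_mul' ih (map_magnusTrunc_augPow_one_le N)).trans (truncLengthGe_mul_le N m 1)

theorem eq_zero_of_liftSubOne_mem_augPow_succ {n : ℕ} {a : FreeAlgebra ℂ (Fin p)}
    (ha : a ∈ genSpan p ^ n) (hθ : θ a ∈ augPow p (n + 1)) : a = 0 := by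
  set E := (FreeAlgebra.equivMonoidAlgebraFreeMonoid : FreeAlgebra ℂ (Fin p) ≃ₐ[ℂ] _)
  have hmk : truncMk ℂ (n + 1) (E a) = 0 := by
    have hcomp := AlgHom.congr_fun (magnusTrunc_comp_liftSubOne (k := ℂ) (n + 1)) a
    rw [AlgHom.comp_apply, AlgHom.comp_apply, AlgEquiv.coe_toAlgHom] at hcomp
    rw [← hcomp, ← mem_bot ℂ, ← truncLengthGe_self]
    exact map_magnusTrunc_augPow_le (n + 1) (n + 1) (mem_map_of_mem hθ)
  have hhigh : E a ∈ lengthSupported ℂ (Set.Ici (n + 1)) := by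
    rw [Ideal.Quotient.mkₐ_eq_mk, Ideal.Quotient.eq_zero_iff_mem] at hmk
    exact mem_truncIdeal.mp hmk
  have hlow : E a ∈ lengthSupported ℂ {n} := map_span_range_ι_pow_le n (mem_map_of_mem ha)
  have hdisj : Disjoint ({n} : Set ℕ) (Set.Ici (n + 1)) :=
    Set.disjoint_singleton_left.mpr (Nat.not_succ_le_self n)
  exact (map_eq_zero_iff E E.injective).mp
    (disjoint_def.mp (disjoint_lengthSupported hdisj) _ hlow hhigh)

variable (p) in
noncomputable def grMap (n : ℕ) : ↥(genSpan p ^ n) →ₗ[ℂ] grPiece p n :=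
  (augPow p (n + 1)).comap (augPow p n).subtype |>.mkQ.comp <|
    (AlgHom.toLinearMap θ ∘ₗ (genSpan p ^ n).subtype).codRestrict _
      fun a => map_genSpan_pow_le n (mem_map_of_mem a.2)

theorem grMap_apply {n : ℕ} (a : ↥(genSpan p ^ n)) :
    grMap p n a = Submodule.Quotient.mk ⟨θ a, map_genSpan_pow_le n (mem_map_of_mem a.2)⟩ :=
  rfl

theorem grMap_injective (n : ℕ) : Function.Injective (grMap p n) := by
  refine LinearMap.ker_eq_bot.mp (LinearMap.ker_eq_bot'.mpr fun a ha => Subtype.ext ?_)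
  rw [grMap_apply, ← Submodule.Quotient.mk_zero, grPiece_mk_eq_iff] at ha
  exact eq_zero_of_liftSubOne_mem_augPow_succ a.2 (by simpa using ha)

theorem grMap_surjective (n : ℕ) : Function.Surjective (grMap p n) := by
  intro q
  obtain ⟨⟨x, hx⟩, rfl⟩ := Submodule.Quotient.mk_surjective _ q
  obtain ⟨_, ⟨a, ha, rfl⟩, r, hr, hx_eq⟩ := mem_sup.mp (augPow_le_map_genSpan_pow_sup n hx)
  refine ⟨⟨a, ha⟩, (grPiece_mk_eq_iff _ _).mpr ?_⟩
  simpa [← hx_eq] using neg_mem hr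

variable (p) in
noncomputable def grEquiv (n : ℕ) : ↥(genSpan p ^ n) ≃ₗ[ℂ] grPiece p n :=
  LinearEquiv.ofBijective (grMap p n) ⟨grMap_injective n, grMap_surjective n⟩

theorem grEquiv_apply {n : ℕ} (a : ↥(genSpan p ^ n)) :
    grEquiv p n a = Submodule.Quotient.mk ⟨θ a, map_genSpan_pow_le n (mem_map_of_mem a.2)⟩ :=
  rfl

end AssociatedGraded

end Magnus

/-- **Magnus: the associated graded of the group algebra of a free group is a free
associative algebra.**  There is an isomorphism of graded `ℂ`-algebras
`ℂ⟨x₁, …, x_p⟩ ≅ gr ℂ[F] = ⊕ₙ Iⁿ/Iⁿ⁺¹` sending `xᵢ` to the class of `γᵢ − 1`: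
a family of degreewise `ℂ`-linear equivalences which is unital, multiplicative
(with respect to the multiplication induced by that of `ℂ[F]` on graded pieces),
and sends each generator `xᵢ` (of word-length degree 1) to `[γᵢ − 1] ∈ I/I²`. -/
theorem freeAlgebra_iso_associatedGraded (p : ℕ) :
    ∃ e : ∀ n : ℕ, ↥(genSpan p ^ n) ≃ₗ[ℂ] grPiece p n,
      -- `e` is unital
      (e 0 ⟨1, by rw [Submodule.pow_zero]; exact Submodule.one_le.mp le_rfl⟩
        = Submodule.Quotient.mk ⟨1, by
            rw [Submodule.restrictScalars_mem, Submodule.pow_zero]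
            exact Submodule.one_le.mp le_rfl⟩) ∧
      -- `e` sends the generator `xᵢ` to the class of `γᵢ − 1`
      (∀ i : Fin p,
        e 1 ⟨FreeAlgebra.ι ℂ i, by
            rw [Submodule.pow_one]; exact Submodule.subset_span ⟨i, rfl⟩⟩
          = Submodule.Quotient.mk ⟨γ p i - 1, by
            rw [Submodule.restrictScalars_mem, Submodule.pow_one]
            exact γ_sub_one_mem p i⟩) ∧
      -- `e` is multiplicative: if `u ∈ Iᵐ` represents `e m x` and `v ∈ Iⁿ` represents
      -- `e n y`, then `[u·v] ∈ Iᵐ⁺ⁿ/Iᵐ⁺ⁿ⁺¹` represents `e (m+n) (x·y)`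
      (∀ (m n : ℕ) (x : ↥(genSpan p ^ m)) (y : ↥(genSpan p ^ n))
        (u : ↥(Submodule.restrictScalars ℂ ((augIdeal p) ^ m)))
        (v : ↥(Submodule.restrictScalars ℂ ((augIdeal p) ^ n))),
        e m x = Submodule.Quotient.mk u →
        e n y = Submodule.Quotient.mk v →
        e (m + n) ⟨(x : FreeAlgebra ℂ (Fin p)) * (y : FreeAlgebra ℂ (Fin p)),
            by rw [pow_add]; exact Submodule.mul_mem_mul x.2 y.2⟩
          = Submodule.Quotient.mk ⟨(u : FreeGroupAlgebra p) * (v : FreeGroupAlgebra p),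
            by rw [Submodule.restrictScalars_mem]
               exact augIdeal_pow_mul_mem p m n u v u.2 v.2⟩) := by
  refine ⟨Magnus.grEquiv p, ?_, ?_, ?_⟩
  · rw [Magnus.grEquiv_apply]
    exact congrArg _ (Subtype.ext (map_one _))
  · intro i
    rw [Magnus.grEquiv_apply]
    exact congrArg _ (Subtype.ext (Magnus.liftSubOne_ι i))
  · intro m n x y u v hx hy
    rw [Magnus.grEquiv_apply, Magnus.grPiece_mk_eq_iff] at hx hy ⊢
    rw [Submodule.coe_mk, map_mul]
    exact Magnus.mul_sub_mul_mem_augPow u.2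
      (Magnus.map_genSpan_pow_le n (Submodule.mem_map_of_mem y.2)) hx hy
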